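/- If (γ*, p*) solves the max-min problem so that p* = γ*(Z* p* + σ*) with p* > 0, max_n p*_n = pmax, and for every admissible (Z, σ) one has Z* p* + σ* ≤ Z p* + σ componentwise (Z*, σ* achieve the minimum interference at p*), then with k' an index attaining p*_{k'} = pmax and Z'_j := Z + pmax^{-1} σ e_jᵀ, one has Z'_{k'}(Z*,σ*) p* = (1/γ*) p* and 1/γ* = ρ(Z'_{k'}(Z*, σ*)) ≤ ρ(Z'_{k'}(Z, σ)) for all admissible (Z, σ). -/

import Mathlib

/-!
Since `p*_{k'} = pmax`, the rank-one term contributes exactly `σ` on `p*`, i.e.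
`Z'_{k'}(Z,σ) p* = Z p* + σ`. So `p*` is a positive eigenvector of the nonnegative matrix
`Z'_{k'}(Z*,σ*)` for `1/γ*`, and minimality of `(Z*,σ*)` gives `(1/γ*) p* ≤ Z'_{k'}(Z,σ) p*`.
Two comparison principles for a nonnegative matrix `A` and a positive vector `y` conclude:
`A y ≤ λ y` bounds every eigenvalue by `λ` (compare an eigenvector with `y` at the coordinate
maximizing `|v_i| / y_i`), and `μ y ≤ A y` forces `‖A^k‖ ≥ μ^k`, hence `ρ(A) ≥ μ` by
Gelfand's formula.
-/

open Matrix

/-- The spectral radius of a real square matrix: the supremum of the moduli of its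
complex eigenvalues. -/
noncomputable def specRad {N : ℕ} (A : Matrix (Fin N) (Fin N) ℝ) : ℝ :=
  sSup {r : ℝ | ∃ μ : ℂ, μ ∈ spectrum ℂ (A.map (fun x : ℝ => (x : ℂ))) ∧ r = ‖μ‖}

namespace Matrix

variable {n : Type*}

lemma add_smul_vecMulVec_single_nonneg [DecidableEq n] {Z : Matrix n n ℝ}
    (hZ : ∀ i j, 0 ≤ Z i j) {s : n → ℝ} (hs : ∀ i, 0 ≤ s i) (k : n) {c : ℝ} (hc : 0 ≤ c)
    (i j : n) : 0 ≤ (Z + c • vecMulVec s (Pi.single k 1)) i j := by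
  have hsingle : (0 : n → ℝ) ≤ Pi.single k 1 := Pi.single_nonneg.2 zero_le_one
  simp only [add_apply, smul_apply, vecMulVec_apply, smul_eq_mul]
  exact add_nonneg (hZ i j) (mul_nonneg hc (mul_nonneg (hs i) (hsingle j)))

variable [Fintype n]

lemma add_smul_vecMulVec_single_mulVec {R : Type*} [Field R] [DecidableEq n] (Z : Matrix n n R)
    (s : n → R) {p : n → R} {k : n} {c : R} (hk : p k = c) (hc : c ≠ 0) :
    (Z + c⁻¹ • vecMulVec s (Pi.single k 1)) *ᵥ p = Z *ᵥ p + s := by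
  rw [add_mulVec, smul_mulVec, vecMulVec_mulVec, single_one_dotProduct, hk,
    op_smul_eq_smul, inv_smul_smul₀ hc]

lemma mulVec_mono_of_nonneg {A : Matrix n n ℝ} (hA : ∀ i j, 0 ≤ A i j) {x y : n → ℝ}
    (hxy : x ≤ y) : A *ᵥ x ≤ A *ᵥ y :=
  fun i => Finset.sum_le_sum fun j _ => mul_le_mul_of_nonneg_left (hxy j) (hA i j)

lemma pow_smul_le_pow_mulVec [DecidableEq n] {A : Matrix n n ℝ} (hA : ∀ i j, 0 ≤ A i j)
    {y : n → ℝ} {μ : ℝ} (hμ : 0 ≤ μ) (h : μ • y ≤ A *ᵥ y) (k : ℕ) :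
    μ ^ k • y ≤ (A ^ k) *ᵥ y := by
  induction k with
  | zero => simp
  | succ k ih =>
    calc μ ^ (k + 1) • y = μ ^ k • μ • y := by rw [pow_succ, mul_smul]
      _ ≤ μ ^ k • (A *ᵥ y) := smul_le_smul_of_nonneg_left h (pow_nonneg hμ k)
      _ = A *ᵥ (μ ^ k • y) := (mulVec_smul _ _ _).symm
      _ ≤ A *ᵥ ((A ^ k) *ᵥ y) := mulVec_mono_of_nonneg hA ih
      _ = (A ^ (k + 1)) *ᵥ y := by rw [mulVec_mulVec, pow_succ']

lemma norm_map_ofReal_mulVec_le {A : Matrix n n ℝ} (hA : ∀ i j, 0 ≤ A i j) (v : n → ℂ)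
    (i : n) :
    ‖(A.map ((↑) : ℝ → ℂ) *ᵥ v) i‖ ≤ (A *ᵥ fun j => ‖v j‖) i := by
  calc ‖(A.map ((↑) : ℝ → ℂ) *ᵥ v) i‖ = ‖∑ j, (A i j : ℂ) * v j‖ := rfl
    _ ≤ ∑ j, ‖(A i j : ℂ) * v j‖ := norm_sum_le _ _
    _ = (A *ᵥ fun j => ‖v j‖) i := by
      simp only [norm_mul, Complex.norm_real, Real.norm_of_nonneg (hA i _)]
      rfl

lemma exists_mulVec_eq_smul_of_mem_spectrum [DecidableEq n] {M : Matrix n n ℂ} {μ : ℂ}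
    (h : μ ∈ spectrum ℂ M) : ∃ v : n → ℂ, v ≠ 0 ∧ M *ᵥ v = μ • v := by
  rw [← spectrum_toLin', ← Module.End.hasEigenvalue_iff_mem_spectrum] at h
  obtain ⟨v, hv⟩ := h.exists_hasEigenvector
  exact ⟨v, hv.2, by simpa only [toLin'_apply] using hv.apply_eq_smul⟩

lemma norm_le_of_mem_spectrum_of_mulVec_le_smul [DecidableEq n] {A : Matrix n n ℝ}
    (hA : ∀ i j, 0 ≤ A i j) {y : n → ℝ} (hy : ∀ i, 0 < y i) {l : ℝ} (h : A *ᵥ y ≤ l • y) {μ : ℂ}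
    (hμ : μ ∈ spectrum ℂ (A.map ((↑) : ℝ → ℂ))) : ‖μ‖ ≤ l := by
  obtain ⟨v, hv0, hv⟩ := exists_mulVec_eq_smul_of_mem_spectrum hμ
  have : Nonempty n := not_isEmpty_iff.1 fun _ => hv0 (Subsingleton.elim _ _)
  obtain ⟨i, -, hi⟩ := Finset.exists_max_image Finset.univ (fun j => ‖v j‖ / y j)
    Finset.univ_nonempty
  set c := ‖v i‖ / y i
  have hvc : (fun j => ‖v j‖) ≤ c • y := fun j =>
    (div_le_iff₀ (hy j)).1 (hi j (Finset.mem_univ j))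
  have hvi : ‖v i‖ = c * y i := (div_mul_cancel₀ _ (hy i).ne').symm
  have hvi_pos : 0 < ‖v i‖ := by
    refine (norm_nonneg _).lt_of_ne fun hvi0 => hv0 (funext fun j => norm_eq_zero.1 ?_)
    have hc : c = 0 := by simp [c, ← hvi0]
    simpa [hc] using hvc j
  refine le_of_mul_le_mul_right ?_ hvi_pos
  calc ‖μ‖ * ‖v i‖ = ‖(A.map ((↑) : ℝ → ℂ) *ᵥ v) i‖ := by
        rw [hv, Pi.smul_apply, smul_eq_mul, norm_mul]
    _ ≤ (A *ᵥ fun j => ‖v j‖) i := norm_map_ofReal_mulVec_le hA v i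
    _ ≤ (A *ᵥ (c • y)) i := mulVec_mono_of_nonneg hA hvc i
    _ = c * (A *ᵥ y) i := by rw [mulVec_smul, Pi.smul_apply, smul_eq_mul]
    _ ≤ c * (l * y i) := mul_le_mul_of_nonneg_left (h i) (div_nonneg (norm_nonneg _) (hy i).le)
    _ = l * ‖v i‖ := by rw [hvi]; ring

lemma map_ofReal_pow [DecidableEq n] (A : Matrix n n ℝ) (k : ℕ) :
    A.map ((↑) : ℝ → ℂ) ^ k = (A ^ k).map ((↑) : ℝ → ℂ) :=
  (map_pow Complex.ofRealHom.mapMatrix A k).symm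

section LinftyOpNorm

attribute [local instance] Matrix.linftyOpNormedAddCommGroup Matrix.linftyOpNormedRing
  Matrix.linftyOpNormedAlgebra

lemma le_linfty_opNorm_of_smul_le_mulVec [Nonempty n] {B : Matrix n n ℝ} {y : n → ℝ}
    (hy : ∀ i, 0 < y i) {c : ℝ} (h : c • y ≤ B *ᵥ y) : c ≤ ‖B‖ := by
  obtain ⟨i, -, hi⟩ := Finset.exists_max_image Finset.univ y Finset.univ_nonempty
  have hy_norm : ‖y‖ ≤ y i := (pi_norm_le_iff_of_nonneg (hy i).le).2 fun j => by
    rw [Real.norm_of_nonneg (hy j).le]; exact hi j (Finset.mem_univ j)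
  refine le_of_mul_le_mul_right ?_ (hy i)
  calc c * y i ≤ (B *ᵥ y) i := h i
    _ ≤ ‖B *ᵥ y‖ := (Real.le_norm_self _).trans (norm_le_pi_norm _ i)
    _ ≤ ‖B‖ * ‖y‖ := linfty_opNorm_mulVec _ _
    _ ≤ ‖B‖ * y i := mul_le_mul_of_nonneg_left hy_norm (norm_nonneg _)

lemma linfty_opNorm_map_ofReal {m : Type*} [Fintype m] (A : Matrix m n ℝ) :
    ‖A.map ((↑) : ℝ → ℂ)‖ = ‖A‖ := by
  simp [linfty_opNorm_def]

lemma ofReal_le_spectralRadius_of_smul_le_mulVec [DecidableEq n] [Nonempty n]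
    {A : Matrix n n ℝ} (hA : ∀ i j, 0 ≤ A i j) {y : n → ℝ} (hy : ∀ i, 0 < y i) {μ : ℝ}
    (hμ : 0 ≤ μ) (h : μ • y ≤ A *ᵥ y) :
    ENNReal.ofReal μ ≤ spectralRadius ℂ (A.map ((↑) : ℝ → ℂ)) := by
  have : CompleteSpace (Matrix n n ℂ) := FiniteDimensional.complete ℂ _
  refine ge_of_tendsto (spectrum.pow_nnnorm_pow_one_div_tendsto_nhds_spectralRadius _)
    (Filter.eventually_atTop.2 ⟨1, fun k hk => ?_⟩)
  have hpow : μ ^ k ≤ ‖A.map ((↑) : ℝ → ℂ) ^ k‖ := by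
    rw [map_ofReal_pow, linfty_opNorm_map_ofReal]
    exact le_linfty_opNorm_of_smul_le_mulVec hy (pow_smul_le_pow_mulVec hA hμ h k)
  rw [one_div, ENNReal.le_rpow_inv_iff (by positivity), ENNReal.rpow_natCast,
    ← ENNReal.ofReal_pow hμ, ← enorm_eq_nnnorm, ← ofReal_norm]
  exact ENNReal.ofReal_le_ofReal hpow

variable {N : ℕ}

lemma bddAbove_norm_spectrum (A : Matrix (Fin N) (Fin N) ℝ) :
    BddAbove {r : ℝ | ∃ μ : ℂ, μ ∈ spectrum ℂ (A.map ((↑) : ℝ → ℂ)) ∧ r = ‖μ‖} := by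
  refine ⟨‖A.map ((↑) : ℝ → ℂ)‖ * ‖(1 : Matrix (Fin N) (Fin N) ℂ)‖, ?_⟩
  rintro r ⟨μ, hμ, rfl⟩
  exact spectrum.norm_le_norm_mul_of_mem hμ

lemma norm_le_specRad {A : Matrix (Fin N) (Fin N) ℝ} {μ : ℂ}
    (hμ : μ ∈ spectrum ℂ (A.map ((↑) : ℝ → ℂ))) : ‖μ‖ ≤ specRad A :=
  le_csSup (bddAbove_norm_spectrum A) ⟨μ, hμ, rfl⟩

lemma specRad_le_of_mulVec_le_smul [Nonempty (Fin N)] {A : Matrix (Fin N) (Fin N) ℝ}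
    (hA : ∀ i j, 0 ≤ A i j) {y : Fin N → ℝ} (hy : ∀ i, 0 < y i) {l : ℝ}
    (h : A *ᵥ y ≤ l • y) : specRad A ≤ l := by
  obtain ⟨μ, hμ⟩ := spectrum.nonempty (A.map ((↑) : ℝ → ℂ))
  refine csSup_le ⟨‖μ‖, μ, hμ, rfl⟩ ?_
  rintro r ⟨ν, hν, rfl⟩
  exact norm_le_of_mem_spectrum_of_mulVec_le_smul hA hy h hν

lemma le_specRad_of_smul_le_mulVec [Nonempty (Fin N)] {A : Matrix (Fin N) (Fin N) ℝ}
    (hA : ∀ i j, 0 ≤ A i j) {y : Fin N → ℝ} (hy : ∀ i, 0 < y i) {μ : ℝ}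
    (hμ : 0 ≤ μ) (h : μ • y ≤ A *ᵥ y) : μ ≤ specRad A := by
  obtain ⟨z, hz, hz_eq⟩ := spectrum.exists_nnnorm_eq_spectralRadius (A.map ((↑) : ℝ → ℂ))
  have hμz : ENNReal.ofReal μ ≤ ENNReal.ofReal ‖z‖ := by
    rw [ofReal_norm, enorm_eq_nnnorm, hz_eq]
    exact ofReal_le_spectralRadius_of_smul_le_mulVec hA hy hμ h
  exact ((ENNReal.ofReal_le_ofReal_iff (norm_nonneg z)).1 hμz).trans (norm_le_specRad hz)

end LinftyOpNorm

end Matrix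

theorem stmt_13_general {N : ℕ} {ι : Type}
    (Z : ι → Matrix (Fin N) (Fin N) ℝ) (σ : ι → (Fin N → ℝ))
    (hZ : ∀ d i j, 0 ≤ Z d i j) (hσ : ∀ d i, 0 < σ d i)
    (pmax : ℝ) (hpmax : 0 < pmax) (γs : ℝ) (hγs : 0 < γs)
    (ps : Fin N → ℝ) (hps : ∀ i, 0 < ps i)
    (k' : Fin N) (hk' : ps k' = pmax)
    (ds : ι) (hfix : ps = γs • (Z ds *ᵥ ps + σ ds))
    (hmin : ∀ d : ι, ∀ n, (Z ds *ᵥ ps + σ ds) n ≤ (Z d *ᵥ ps + σ d) n) :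
    (Z ds + pmax⁻¹ • vecMulVec (σ ds) (Pi.single k' 1)) *ᵥ ps = γs⁻¹ • ps ∧
    γs⁻¹ = specRad (Z ds + pmax⁻¹ • vecMulVec (σ ds) (Pi.single k' 1)) ∧
    (∀ d : ι, specRad (Z ds + pmax⁻¹ • vecMulVec (σ ds) (Pi.single k' 1)) ≤
      specRad (Z d + pmax⁻¹ • vecMulVec (σ d) (Pi.single k' 1))) := by
  have : Nonempty (Fin N) := ⟨k'⟩
  have hmulVec (d : ι) : (Z d + pmax⁻¹ • vecMulVec (σ d) (Pi.single k' 1)) *ᵥ ps =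
      Z d *ᵥ ps + σ d :=
    add_smul_vecMulVec_single_mulVec _ _ hk' hpmax.ne'
  have hnonneg (d : ι) := add_smul_vecMulVec_single_nonneg (hZ d) (fun i => (hσ d i).le) k'
    (inv_nonneg.2 hpmax.le)
  have hfix' : γs⁻¹ • ps = Z ds *ᵥ ps + σ ds := (inv_smul_eq_iff₀ hγs.ne').2 hfix
  have heig : (Z ds + pmax⁻¹ • vecMulVec (σ ds) (Pi.single k' 1)) *ᵥ ps = γs⁻¹ • ps := by
    rw [hmulVec, hfix']
  have hρ : specRad (Z ds + pmax⁻¹ • vecMulVec (σ ds) (Pi.single k' 1)) = γs⁻¹ :=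
    le_antisymm (specRad_le_of_mulVec_le_smul (hnonneg ds) hps heig.le)
      (le_specRad_of_smul_le_mulVec (hnonneg ds) hps (inv_nonneg.2 hγs.le) heig.ge)
  refine ⟨heig, hρ.symm, fun d => hρ ▸ ?_⟩
  refine le_specRad_of_smul_le_mulVec (hnonneg d) hps (inv_nonneg.2 hγs.le) ?_
  rw [hmulVec, hfix']
  exact hmin d

/-- If `(γ*, p*)` satisfies `p* = γ*(Z* p* + σ*)` with `p* > 0`,
`max_n p*_n = pmax` attained at `k'`, and `(Z*, σ*)` minimizes the interference
`Z p* + σ` componentwise over a finite admissible family, then with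
`Z'_j(Z,σ) := Z + pmax⁻¹ σ e_jᵀ` we have `Z'_{k'}(Z*,σ*) p* = (1/γ*) p*` and
`1/γ* = ρ(Z'_{k'}(Z*,σ*)) ≤ ρ(Z'_{k'}(Z,σ))` for every admissible `(Z,σ)`. -/
theorem stmt_13 {N : ℕ} {ι : Type} [Fintype ι] [Nonempty ι]
    (Z : ι → Matrix (Fin N) (Fin N) ℝ) (σ : ι → (Fin N → ℝ))
    (hZ : ∀ d i j, 0 ≤ Z d i j) (hσ : ∀ d i, 0 < σ d i)
    (pmax : ℝ) (hpmax : 0 < pmax) (γs : ℝ) (hγs : 0 < γs)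
    (ps : Fin N → ℝ) (hps : ∀ i, 0 < ps i) (hle : ∀ n, ps n ≤ pmax)
    (k' : Fin N) (hk' : ps k' = pmax)
    (ds : ι) (hfix : ps = γs • (Z ds *ᵥ ps + σ ds))
    (hmin : ∀ d : ι, ∀ n, (Z ds *ᵥ ps + σ ds) n ≤ (Z d *ᵥ ps + σ d) n) :
    (Z ds + pmax⁻¹ • vecMulVec (σ ds) (Pi.single k' 1)) *ᵥ ps = γs⁻¹ • ps ∧
    γs⁻¹ = specRad (Z ds + pmax⁻¹ • vecMulVec (σ ds) (Pi.single k' 1)) ∧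
    (∀ d : ι, specRad (Z ds + pmax⁻¹ • vecMulVec (σ ds) (Pi.single k' 1)) ≤
      specRad (Z d + pmax⁻¹ • vecMulVec (σ d) (Pi.single k' 1))) :=
  stmt_13_general Z σ hZ hσ pmax hpmax γs hγs ps hps k' hk' ds hfix hmin
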